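/- arXiv:1604.06600 — 2 statements merged into one kernel-verified Lean document; each statement's English description precedes it below -/
import Mathlib

section
/- If a local rule f : {0,1}^3 → {0,1} appears as a cell rule in some number-conserving non-uniform cyclic CA of length n ≥ 5 (where all cells use rules from {0,1}^3 → {0,1}), then f(0,0,0) = 0, f(1,1,1) = 1, and f satisfies: ((f(0,0,0)=f(1,0,0) and f(0,0,1)=f(1,0,1)) or (f(0,0,0)=f(0,0,1) and f(1,0,0)=f(1,0,1))) and ((f(0,1,0)=f(1,1,0) and f(0,1,1)=f(1,1,1)) or (f(0,1,0)=f(0,1,1) and f(1,1,0)=f(1,1,1))). -/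
/-- Global map of a non-uniform cyclic CA of length `n`:
cell `i` updates via its local rule applied to `(x (i-1), x i, x (i+1))`, indices mod `n`. -/
def caStep (n : ℕ) [NeZero n] (f : Fin n → Bool → Bool → Bool → Bool)
    (x : Fin n → Bool) : Fin n → Bool :=
  fun i => f i (x (i - 1)) (x i) (x (i + 1))

/-- Number of cells in state `true` (i.e. 1). -/
def onesCount (n : ℕ) (x : Fin n → Bool) : ℕ :=
  (Finset.univ.filter fun i => x i = true).card

/-- The CA conserves the number of 1s in every configuration. -/
def numberConserving (n : ℕ) [NeZero n] (f : Fin n → Bool → Bool → Bool → Bool) : Prop :=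
  ∀ x : Fin n → Bool, onesCount n (caStep n f x) = onesCount n x

/-- The elementary CA rule with Wolfram number `R`. -/
def wolfram (R : ℕ) (a b c : Bool) : Bool :=
  R.testBit (4 * a.toNat + 2 * b.toNat + c.toNat)

/-- Structural condition on the `b = 0` half of the rule table. -/
def cond2 (f : Bool → Bool → Bool → Bool) : Prop :=
  (f false false false = f true false false ∧ f false false true = f true false true) ∨
  (f false false false = f false false true ∧ f true false false = f true false true)

/-- Structural condition on the `b = 1` half of the rule table. -/
def cond3 (f : Bool → Bool → Bool → Bool) : Prop :=
  (f false true false = f true true false ∧ f false true true = f true true true) ∨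
  (f false true false = f false true true ∧ f true true false = f true true true)

/-- A rule satisfying all structural conditions of a number conserving rule. -/
def NCrule (f : Bool → Bool → Bool → Bool) : Prop :=
  f false false false = false ∧ f true true true = true ∧ cond2 f ∧ cond3 f

/-!
The all-zero and all-one configurations force `f i 0 0 0 = 0` and `f i 1 1 1 = 1`. For the two
structural conditions, perturb a configuration only at the cells `i - 1` and `i + 1`, to values
`a` and `c`, and take the mixed second difference in `(a, c)` of the number of ones. Before the
step it vanishes, since every cell sees at most one of the two perturbed cells. After the step
the same holds for every cell except `i`: for `n ≥ 5` no other neighbourhood contains both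
`i - 1` and `i + 1`. Conservation thus makes the mixed difference of `(a, c) ↦ f i a b c`
vanish, and for Boolean values this is exactly `cond2` (`b = 0`) and `cond3` (`b = 1`).
-/

def mixedDiff (g : Bool → Bool → ℤ) : ℤ :=
  g true true + g false false - g true false - g false true

lemma mixedDiff_sum {ι : Type*} (s : Finset ι) (g : ι → Bool → Bool → ℤ) :
    mixedDiff (fun a c => ∑ j ∈ s, g j a c) = ∑ j ∈ s, mixedDiff (g j) := by
  simp only [mixedDiff, Finset.sum_add_distrib, Finset.sum_sub_distrib]

lemma mixedDiff_eq_zero_of_indep {g : Bool → Bool → ℤ}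
    (hg : (∀ a a' c, g a c = g a' c) ∨ ∀ a c c', g a c = g a c') : mixedDiff g = 0 := by
  rcases hg with hg | hg
  · rw [mixedDiff, hg true false true, hg true false false]; ring
  · rw [mixedDiff, hg true true false, hg false true false]; ring

lemma mixedDiff_toNat_eq_zero_iff (g : Bool → Bool → Bool) :
    mixedDiff (fun a c => (g a c).toNat) = 0 ↔
      (g false false = g true false ∧ g false true = g true true) ∨
      (g false false = g false true ∧ g true false = g true true) := by
  simp only [mixedDiff]
  cases g true true <;> cases g false false <;> cases g true false <;> cases g false true <;>
    decide

lemma onesCount_eq_sum (n : ℕ) (x : Fin n → Bool) :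
    onesCount n x = ∑ j, (x j).toNat := by
  rw [onesCount, Finset.card_filter]
  exact Finset.sum_congr rfl fun j _ => by cases x j <;> rfl

section
open Fin.CommRing

variable {n : ℕ} [NeZero n]

lemma Fin.natCast_ne_zero_of_pos_of_lt {k : ℕ} (hk : 0 < k) (hkn : k < n) :
    (k : Fin n) ≠ 0 := by
  rw [Ne, Fin.natCast_eq_zero]
  exact Nat.not_dvd_of_pos_of_lt hk hkn

lemma Fin.ne_sub_one (hn : 2 ≤ n) (i : Fin n) : i ≠ i - 1 := fun he =>
  Fin.natCast_ne_zero_of_pos_of_lt (k := 1) (by omega) hn (by push_cast; linear_combination he)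

lemma Fin.ne_add_one (hn : 2 ≤ n) (i : Fin n) : i ≠ i + 1 := fun he =>
  Fin.natCast_ne_zero_of_pos_of_lt (k := 1) (by omega) hn (by push_cast; linear_combination -he)

lemma Fin.sub_one_ne_add_one (hn : 3 ≤ n) (i : Fin n) : i - 1 ≠ i + 1 := fun he =>
  Fin.natCast_ne_zero_of_pos_of_lt (k := 2) (by omega) hn (by push_cast; linear_combination -he)

/-- Both `i - 1` and `i + 1` lie in the neighbourhood of `j ≠ i` only if `2`, `3` or `4`
vanishes in `Fin n`. -/
lemma Fin.neighbourhood_avoids_sub_one_or_add_one (hn : 5 ≤ n) {i j : Fin n} (hji : j ≠ i) :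
    (j - 1 ≠ i - 1 ∧ j ≠ i - 1 ∧ j + 1 ≠ i - 1) ∨
      (j - 1 ≠ i + 1 ∧ j ≠ i + 1 ∧ j + 1 ≠ i + 1) := by
  have h2 : ((2 : ℕ) : Fin n) ≠ 0 := Fin.natCast_ne_zero_of_pos_of_lt (by omega) (by omega)
  have h3 : ((3 : ℕ) : Fin n) ≠ 0 := Fin.natCast_ne_zero_of_pos_of_lt (by omega) (by omega)
  have h4 : ((4 : ℕ) : Fin n) ≠ 0 := Fin.natCast_ne_zero_of_pos_of_lt (by omega) (by omega)
  push_cast at h2 h3 h4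
  grind

def perturb (x : Fin n → Bool) (i : Fin n) (a c : Bool) : Fin n → Bool :=
  Function.update (Function.update x (i - 1) a) (i + 1) c

section Perturb

variable (x : Fin n → Bool) (i : Fin n)

lemma perturb_apply_of_ne_sub_one {k : Fin n} (hk : k ≠ i - 1) (a a' c : Bool) :
    perturb x i a c k = perturb x i a' c k := by
  by_cases hki : k = i + 1
  · simp [perturb, hki]
  · simp [perturb, Function.update_of_ne hki, Function.update_of_ne hk]

lemma perturb_apply_of_ne_add_one {k : Fin n} (hk : k ≠ i + 1) (a c c' : Bool) :
    perturb x i a c k = perturb x i a c' k := by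
  simp [perturb, Function.update_of_ne hk]

lemma caStep_perturb_apply (hn : 3 ≤ n) (f : Fin n → Bool → Bool → Bool → Bool) (a c : Bool) :
    caStep n f (perturb x i a c) i = f i a (x i) c := by
  simp [caStep, perturb, Function.update_of_ne, Fin.sub_one_ne_add_one hn,
    Fin.ne_sub_one (n := n) (by omega), Fin.ne_add_one (n := n) (by omega)]

lemma mixedDiff_onesCount_perturb (hn : 3 ≤ n) :
    mixedDiff (fun a c => onesCount n (perturb x i a c)) = 0 := by
  simp only [onesCount_eq_sum, Nat.cast_sum, mixedDiff_sum]
  refine Finset.sum_eq_zero fun k _ => mixedDiff_eq_zero_of_indep ?_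
  by_cases hk : k = i - 1
  · exact .inr fun a c c' => by
      rw [perturb_apply_of_ne_add_one x i (hk ▸ Fin.sub_one_ne_add_one hn i) a c c']
  · exact .inl fun a a' c => by rw [perturb_apply_of_ne_sub_one x i hk a a' c]

lemma mixedDiff_onesCount_caStep_perturb (hn : 5 ≤ n) (f : Fin n → Bool → Bool → Bool → Bool) :
    mixedDiff (fun a c => onesCount n (caStep n f (perturb x i a c))) =
      mixedDiff (fun a c => (f i a (x i) c).toNat) := by
  simp only [onesCount_eq_sum, Nat.cast_sum, mixedDiff_sum]
  rw [Finset.sum_eq_single i]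
  · simp only [caStep_perturb_apply x i (by omega)]
  · intro j _ hji
    refine mixedDiff_eq_zero_of_indep ?_
    rcases Fin.neighbourhood_avoids_sub_one_or_add_one hn hji with ⟨h₁, h₂, h₃⟩ | ⟨h₁, h₂, h₃⟩
    · exact .inl fun a a' c => by
        simp only [caStep, perturb_apply_of_ne_sub_one x i h₁ a a' c,
          perturb_apply_of_ne_sub_one x i h₂ a a' c, perturb_apply_of_ne_sub_one x i h₃ a a' c]
    · exact .inr fun a c c' => by
        simp only [caStep, perturb_apply_of_ne_add_one x i h₁ a c c',
          perturb_apply_of_ne_add_one x i h₂ a c c', perturb_apply_of_ne_add_one x i h₃ a c c']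
  · simp

end Perturb

namespace numberConserving

variable {f : Fin n → Bool → Bool → Bool → Bool}

lemma apply_false (h : numberConserving n f) (i : Fin n) : f i false false false = false := by
  have hcount := h fun _ => false
  simp only [onesCount, Bool.false_eq_true, Finset.filter_false, Finset.card_empty,
    Finset.card_eq_zero, Finset.filter_eq_empty_iff] at hcount
  simpa [caStep] using hcount (Finset.mem_univ i)

lemma apply_true (h : numberConserving n f) (i : Fin n) : f i true true true = true := by
  have hcount := h fun _ => true
  simp only [onesCount, Finset.filter_true, Finset.card_filter_eq_iff] at hcount
  exact hcount i (Finset.mem_univ i)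

lemma mixedDiff_eq_zero (h : numberConserving n f) (hn : 5 ≤ n) (i : Fin n) (b : Bool) :
    mixedDiff (fun a c => (f i a b c).toNat) = 0 := by
  have hconserve := congrArg mixedDiff <| funext₂ fun a c =>
    congrArg (Nat.cast : ℕ → ℤ) (h (perturb (fun _ => b) i a c))
  rwa [mixedDiff_onesCount_caStep_perturb _ i hn, mixedDiff_onesCount_perturb _ i (by omega)]
    at hconserve

end numberConserving

end

theorem stmt12 (n : ℕ) (hn : 5 ≤ n) [NeZero n] (f : Fin n → Bool → Bool → Bool → Bool)
    (h : numberConserving n f) :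
    ∀ i : Fin n, NCrule (f i) := fun i =>
  ⟨h.apply_false i, h.apply_true i,
    (mixedDiff_toNat_eq_zero_iff _).1 (h.mixedDiff_eq_zero hn i false),
    (mixedDiff_toNat_eq_zero_iff _).1 (h.mixedDiff_eq_zero hn i true)⟩
end

section
/- In a number-conserving non-uniform cyclic CA of length n ≥ 5, for each cell i: if f_i(0,1,1) ≠ f_i(1,1,1) then f_i(0,1,0) = 0 and f_i(1,1,0) = 1. -/
/-!
Raising a cell `p` from 0 to 1 raises the number of 1s by one, so by conservation it raises the
number of 1s of the image by one; and only the cells `p - 1`, `p`, `p + 1` can see the change.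
Take `p = i - 1`. When `n ≥ 5` the cells `i - 2` and `i - 1` cannot see cell `i + 1`, so their
share of the gain does not depend on it, and hence neither does the gain
`f i 1 b c - f i 0 b c` at cell `i`. With `b = 1` this gives
`f i 1 1 0 - f i 0 1 0 = f i 1 1 1 - f i 0 1 1`, which is `1` once `f i 0 1 1 ≠ f i 1 1 1 = 1`.
-/

open Function Finset

theorem onesCount_eq_sum_toNat {n : ℕ} (x : Fin n → Bool) :
    onesCount n x = ∑ j, (x j).toNat := by
  rw [onesCount, card_filter]
  exact sum_congr rfl fun j _ => by cases x j <;> rfl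

theorem Finset.sum_toNat_update {ι : Type*} [Fintype ι] [DecidableEq ι] (x : ι → Bool) (p : ι)
    (b : Bool) : ∑ j, (update x p b j).toNat = b.toNat + ∑ j ∈ univ.erase p, (x j).toNat := by
  rw [← add_sum_erase _ _ (mem_univ p), update_self]
  exact congrArg _ (sum_congr rfl fun j hj => by rw [update_of_ne (ne_of_mem_erase hj)])

open Fin.CommRing in
theorem Fin.ne_of_natCast_eq_sub {n k : ℕ} [NeZero n] {a b : Fin n} (hk : 0 < k) (hkn : k < n)
    (h : (k : Fin n) = b - a) : a ≠ b := by
  rintro rfl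
  rw [sub_self, Fin.natCast_eq_zero] at h
  exact Nat.not_dvd_of_pos_of_lt hk hkn h

section
variable {n : ℕ} [NeZero n] {f : Fin n → Bool → Bool → Bool → Bool}

theorem numberConserving.sum_toNat_caStep (h : numberConserving n f) (x : Fin n → Bool) :
    ∑ j, (caStep n f x j).toNat = ∑ j, (x j).toNat := by
  simpa only [onesCount_eq_sum_toNat] using h x

theorem caStep_update_of_ne {x : Fin n → Bool} {q j : Fin n} (b : Bool)
    (h₁ : j - 1 ≠ q) (h₂ : j ≠ q) (h₃ : j + 1 ≠ q) :
    caStep n f (update x q b) j = caStep n f x j := by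
  simp only [caStep, update_of_ne h₁, update_of_ne h₂, update_of_ne h₃]

theorem numberConserving.sum_window_update_true (h : numberConserving n f)
    (x : Fin n → Bool) (p : Fin n) :
    ∑ j ∈ {p - 1, p, p + 1}, (caStep n f (update x p true) j).toNat =
      ∑ j ∈ {p - 1, p, p + 1}, (caStep n f (update x p false) j).toNat + 1 := by
  have total : ∀ b, ∑ j ∈ {p - 1, p, p + 1}, (caStep n f (update x p b) j).toNat +
      ∑ j ∈ {p - 1, p, p + 1}ᶜ, (caStep n f x j).toNat =
        b.toNat + ∑ j ∈ univ.erase p, (x j).toNat := by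
    intro b
    have outside : ∀ j ∉ ({p - 1, p, p + 1} : Finset (Fin n)),
        caStep n f (update x p b) j = caStep n f x j := by
      intro j hj
      simp only [mem_insert, mem_singleton, not_or] at hj
      obtain ⟨h₁, h₂, h₃⟩ := hj
      exact caStep_update_of_ne b (fun e => h₃ (sub_eq_iff_eq_add.mp e)) h₂
        (fun e => h₁ (eq_sub_of_add_eq e))
    rw [← sum_congr rfl fun j hj => congrArg Bool.toNat (outside j (mem_compl.mp hj)),
      sum_add_sum_compl, h.sum_toNat_caStep, sum_toNat_update]
  have := total true
  have := total false
  simp only [Bool.toNat_true, Bool.toNat_false] at *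
  omega

theorem numberConserving.rule_true_true_true (h : numberConserving n f) (i : Fin n) :
    f i true true true = true := by
  have all_ones := h.sum_toNat_caStep fun _ => true
  rw [Bool.toNat_true, sum_eq_sum_iff_of_le fun j _ => Bool.toNat_le _] at all_ones
  simpa [caStep] using all_ones i (mem_univ i)

open Fin.CommRing in
theorem caStep_update_add_one_of_mem_erase (hn : 5 ≤ n) (x : Fin n → Bool) (i : Fin n)
    (c : Bool) {j : Fin n} (hj : j ∈ ({i - 1 - 1, i - 1, i - 1 + 1} : Finset (Fin n)).erase i) :
    caStep n f (update x (i + 1) c) j = caStep n f x j := by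
  have h₁ : i ≠ i + 1 := Fin.ne_of_natCast_eq_sub (k := 1) (by omega) (by omega) (by ring)
  have h₂ : i - 1 ≠ i + 1 := Fin.ne_of_natCast_eq_sub (k := 2) (by omega) (by omega) (by ring)
  have h₃ : i - 1 - 1 ≠ i + 1 := Fin.ne_of_natCast_eq_sub (k := 3) (by omega) (by omega) (by ring)
  have h₄ : i - 1 - 1 - 1 ≠ i + 1 :=
    Fin.ne_of_natCast_eq_sub (k := 4) (by omega) (by omega) (by ring)
  simp only [mem_erase, mem_insert, mem_singleton, sub_add_cancel] at hj
  obtain ⟨hji, rfl | rfl | rfl⟩ := hj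
  · exact caStep_update_of_ne c h₄ h₃ (by rwa [sub_add_cancel])
  · exact caStep_update_of_ne c h₃ h₂ (by rwa [sub_add_cancel])
  · exact absurd rfl hji

open Fin.CommRing in
theorem numberConserving.toNat_add_toNat_swap (h : numberConserving n f) (hn : 5 ≤ n)
    (i : Fin n) (b c c' : Bool) :
    (f i true b c).toNat + (f i false b c').toNat =
      (f i false b c).toNat + (f i true b c').toNat := by
  have h₁ : i - 1 ≠ i := Fin.ne_of_natCast_eq_sub (k := 1) (by omega) (by omega) (by ring)
  have h₂ : i ≠ i + 1 := Fin.ne_of_natCast_eq_sub (k := 1) (by omega) (by omega) (by ring)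
  have h₃ : i - 1 ≠ i + 1 := Fin.ne_of_natCast_eq_sub (k := 2) (by omega) (by omega) (by ring)
  set W : Finset (Fin n) := {i - 1 - 1, i - 1, i - 1 + 1}
  set y : Bool → Bool → Fin n → Bool := fun a c => update (update (fun _ => b) (i + 1) c) (i - 1) a
  have split : ∀ a c, ∑ j ∈ W, (caStep n f (y a c) j).toNat =
      (f i a b c).toNat + ∑ j ∈ W.erase i, (caStep n f (update (fun _ => b) (i - 1) a) j).toNat := by
    intro a c
    rw [← add_sum_erase _ _ (by simp [W] : i ∈ W)]
    congr 1
    · simp only [caStep, y, update_self, update_of_ne h₁.symm, update_of_ne h₂,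
        update_of_ne h₃.symm]
    · refine sum_congr rfl fun j hj => ?_
      simp only [y, ← update_comm h₃ (β := fun _ => Bool)]
      rw [caStep_update_add_one_of_mem_erase hn _ i c hj]
  have flip : ∀ c, ∑ j ∈ W, (caStep n f (y true c) j).toNat =
      ∑ j ∈ W, (caStep n f (y false c) j).toNat + 1 :=
    fun c => h.sum_window_update_true _ (i - 1)
  have hc := flip c
  have hc' := flip c'
  rw [split, split] at hc hc'
  omega

end

theorem stmt14 (n : ℕ) (hn : 5 ≤ n) [NeZero n] (f : Fin n → Bool → Bool → Bool → Bool)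
    (h : numberConserving n f) :
    ∀ i : Fin n, f i false true true ≠ f i true true true →
      f i false true false = false ∧ f i true true false = true := by
  intro i hne
  have h111 := h.rule_true_true_true i
  have h011 : f i false true true = false := by simpa [h111] using hne
  have key := h.toNat_add_toNat_swap hn i true true false
  rw [h111, h011, Bool.toNat_true, Bool.toNat_false] at key
  have := Bool.toNat_le (f i true true false)
  exact ⟨Bool.toNat_eq_zero.mp (by omega), Bool.toNat_eq_one.mp (by omega)⟩
end
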